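/- Let A₁₁, A₁₂, A₂₂ be Riccati data on a complex separable Hilbert space H with diag{A₁₁} − A₂₂ ≫ 0, and let (sₙ) be the successive approximations. Then the even subsequence s₀, s₂, s₄, … is monotonically increasing in the Loewner order (s₀ ≤ s₂ ≤ s₄ ≤ …) and has a strong operator limit: there exists a selfadjoint operator s̲ ∈ B(H) such that s_{2n}x → s̲x in H for every x ∈ H. -/

import Mathlib

open MeasureTheory ContinuousLinearMap Filter
open scoped ENNReal NNReal Topology

noncomputable section

/-- `ℓ²(H)`: the Hilbert space of square-summable sequences in `H`, indexed by `ℕ`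
(index `k : ℕ` corresponds to the `(k+1)`-st entry in the paper's `1`-based indexing). -/
abbrev l2 (H : Type*) [NormedAddCommGroup H] [InnerProductSpace ℂ H] : Type _ :=
  lp (fun _ : ℕ => H) 2

variable {H : Type*} [NormedAddCommGroup H] [InnerProductSpace ℂ H]

lemma memℓp_diag (q : H →L[ℂ] H) (ξ : l2 H) : Memℓp (fun k => q (ξ k)) 2 := by
  have h2 : (0:ℝ) < (2 : ℝ≥0∞).toReal := by norm_num
  apply memℓp_gen
  have hs : Summable (fun k => ‖q‖ ^ (2 : ℝ≥0∞).toReal * ‖ξ k‖ ^ (2 : ℝ≥0∞).toReal) :=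
    ((lp.memℓp ξ).summable h2).mul_left _
  refine Summable.of_nonneg_of_le (fun k => ?_) (fun k => ?_) hs
  · positivity
  · rw [← Real.mul_rpow (norm_nonneg _) (norm_nonneg _)]
    exact Real.rpow_le_rpow (norm_nonneg _) (q.le_opNorm _) (by norm_num)

/-- `diag{q}`: the bounded block-diagonal operator on `ℓ²(H)` acting componentwise,
`(diag{q} ξ)ₖ = q (ξₖ)`. -/
def diagOp (q : H →L[ℂ] H) : l2 H →L[ℂ] l2 H :=
  LinearMap.mkContinuous
    { toFun := fun ξ => ⟨fun k => q (ξ k), memℓp_diag q ξ⟩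
      map_add' := fun ξ η => by ext k; (simp [lp.coeFn_add]) <;> rfl
      map_smul' := fun c ξ => by ext k; simp [lp.coeFn_smul] }
    ‖q‖
    (by
      intro ξ
      have h2 : (0:ℝ) < (2 : ℝ≥0∞).toReal := by norm_num
      refine lp.norm_le_of_tsum_le h2 (by positivity) ?_
      have hξ : ‖ξ‖ ^ (2 : ℝ≥0∞).toReal = ∑' k, ‖ξ k‖ ^ (2 : ℝ≥0∞).toReal :=
        lp.norm_rpow_eq_tsum h2 ξ
      have hsum : Summable (fun k => ‖ξ k‖ ^ (2 : ℝ≥0∞).toReal) := (lp.memℓp ξ).summable h2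
      calc ∑' k, ‖(fun k => q (ξ k)) k‖ ^ (2 : ℝ≥0∞).toReal
          ≤ ∑' k, ‖q‖ ^ (2 : ℝ≥0∞).toReal * ‖ξ k‖ ^ (2 : ℝ≥0∞).toReal := by
            refine Summable.tsum_le_tsum (fun k => ?_) ?_ (hsum.mul_left _)
            · rw [← Real.mul_rpow (norm_nonneg _) (norm_nonneg _)]
              exact Real.rpow_le_rpow (norm_nonneg _) (q.le_opNorm _) (by norm_num)
            · refine Summable.of_nonneg_of_le (fun k => ?_) (fun k => ?_)
                (hsum.mul_left (‖q‖ ^ (2 : ℝ≥0∞).toReal))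
              · positivity
              · rw [← Real.mul_rpow (norm_nonneg _) (norm_nonneg _)]
                exact Real.rpow_le_rpow (norm_nonneg _) (q.le_opNorm _) (by norm_num)
        _ = (‖q‖ * ‖ξ‖) ^ (2 : ℝ≥0∞).toReal := by
            rw [tsum_mul_left, ← hξ, Real.mul_rpow (norm_nonneg _) (norm_nonneg _)])

@[simp] lemma diagOp_apply (q : H →L[ℂ] H) (ξ : l2 H) (k : ℕ) :
    (diagOp q ξ) k = q (ξ k) := rfl

/-- An operator is *strongly positive* (written `ρ ≫ 0` in the paper) if `δ • I ≤ ρ`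
(Loewner order) for some `δ > 0`.  A strongly positive operator is boundedly invertible. -/
def StronglyPositive {E : Type*} [NormedAddCommGroup E] [InnerProductSpace ℂ E]
    [CompleteSpace E] (ρ : E →L[ℂ] E) : Prop :=
  ∃ δ : ℝ, 0 < δ ∧ δ • (1 : E →L[ℂ] E) ≤ ρ

variable [CompleteSpace H]

/-- The Riccati map `ℱ(s) = A₁₁ + A₁₂ (diag{s} − A₂₂)⁻¹ A₁₂*`.  Here `Ring.inverse` is the
genuine inverse whenever `diag{s} − A₂₂` is boundedly invertible, which is guaranteed when
`diag{s} − A₂₂ ≫ 0`. -/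
def riccatiMap (A11 : H →L[ℂ] H) (A12 : l2 H →L[ℂ] H) (A22 : l2 H →L[ℂ] l2 H)
    (s : H →L[ℂ] H) : H →L[ℂ] H :=
  A11 + A12 ∘L Ring.inverse (diagOp s - A22) ∘L ContinuousLinearMap.adjoint A12

/-- The successive approximations `s₀ = A₁₁`, `s_{n+1} = ℱ(sₙ)`. -/
def riccatiSeq (A11 : H →L[ℂ] H) (A12 : l2 H →L[ℂ] H) (A22 : l2 H →L[ℂ] l2 H) :
    ℕ → (H →L[ℂ] H)
  | 0 => A11
  | n + 1 => riccatiMap A11 A12 A22 (riccatiSeq A11 A12 A22 n)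

end
/-!
On `{s | A₁₁ ≤ s}` the Riccati map `ℱ` is order-reversing and maps this set into itself: there
`diag{s} − A₂₂ ≥ diag{A₁₁} − A₂₂ ≫ 0`, inversion is antitone on strictly positive operators and
`ρ ↦ A₁₂ ρ A₁₂*` is monotone. Hence `ℱ ∘ ℱ` is monotone, so `s₀ ≤ s₂` propagates to
`s_{2n} ≤ s_{2n+2}`, and every iterate lies below `s₁ = ℱ(A₁₁)`.

A bounded increasing sequence `fₙ` of selfadjoint operators converges strongly: for `n ≤ m` the
operator `p = fₘ − fₙ ≥ 0` satisfies `‖p x‖² ≤ ‖p‖ ⟪p x, x⟫`, where `‖p‖` is bounded uniformly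
and `⟪fₙ x, x⟫` is an increasing bounded real sequence, so `(fₙ x)` is Cauchy. Banach–Steinhaus
makes the pointwise limit bounded.
-/

open ContinuousLinearMap Filter Topology RCLike
open scoped InnerProductSpace ComplexOrder

section LoewnerOrder

variable {E : Type*} [NormedAddCommGroup E] [InnerProductSpace ℂ E]

lemma isPositive_of_inner_nonneg {T : E →L[ℂ] E} (h : ∀ x, 0 ≤ ⟪T x, x⟫_ℂ) : T.IsPositive := by
  refine (isPositive_iff_complex T).2 fun x => ?_
  obtain ⟨hre, him⟩ := Complex.nonneg_iff.1 (h x)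
  exact ⟨Complex.ext (by simp) (by simpa using him), hre⟩

lemma re_inner_le_re_inner_of_le {p q : E →L[ℂ] E} (hpq : p ≤ q) (x : E) :
    re ⟪p x, x⟫_ℂ ≤ re ⟪q x, x⟫_ℂ := by
  have := hpq.re_inner_nonneg_left x
  rw [sub_apply, inner_sub_left, map_sub, sub_nonneg] at this
  exact this

variable [CompleteSpace E]
  {F : Type*} [NormedAddCommGroup F] [InnerProductSpace ℂ F] [CompleteSpace F]

lemma StronglyPositive.isStrictlyPositive {ρ : E →L[ℂ] E} (h : StronglyPositive ρ) :
    IsStrictlyPositive ρ :=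
  let ⟨_, hδ, hδρ⟩ := h
  (isStrictlyPositive_one.smul hδ).of_le hδρ

lemma StronglyPositive.mono {ρ σ : E →L[ℂ] E} (h : StronglyPositive ρ) (hρσ : ρ ≤ σ) :
    StronglyPositive σ :=
  let ⟨δ, hδ, hδρ⟩ := h
  ⟨δ, hδ, hδρ.trans hρσ⟩

lemma comp_comp_adjoint_nonneg (B : F →L[ℂ] E) {ρ : F →L[ℂ] F} (hρ : 0 ≤ ρ) :
    0 ≤ B ∘L ρ ∘L adjoint B :=
  (nonneg_iff_isPositive _).2 (((nonneg_iff_isPositive ρ).1 hρ).conj_adjoint B)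

lemma comp_comp_adjoint_mono (B : F →L[ℂ] E) {ρ σ : F →L[ℂ] F} (hρσ : ρ ≤ σ) :
    B ∘L ρ ∘L adjoint B ≤ B ∘L σ ∘L adjoint B := by
  rw [← sub_nonneg, ← comp_sub, ← sub_comp]
  exact comp_comp_adjoint_nonneg B (sub_nonneg.2 hρσ)

lemma comp_ringInverse_comp_adjoint_nonneg (B : F →L[ℂ] E) {ρ : F →L[ℂ] F}
    (hρ : IsStrictlyPositive ρ) : 0 ≤ B ∘L Ring.inverse ρ ∘L adjoint B :=
  comp_comp_adjoint_nonneg B hρ.ringInverse.nonneg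

lemma comp_ringInverse_comp_adjoint_antitone (B : F →L[ℂ] E) {ρ σ : F →L[ℂ] F}
    (hρ : IsStrictlyPositive ρ) (hρσ : ρ ≤ σ) :
    B ∘L Ring.inverse σ ∘L adjoint B ≤ B ∘L Ring.inverse ρ ∘L adjoint B :=
  comp_comp_adjoint_mono B (CStarAlgebra.ringInverse_le_ringInverse hρσ hρ)

lemma norm_apply_sq_le_norm_mul_re_inner {p : E →L[ℂ] E} (hp : 0 ≤ p) (x : E) :
    ‖p x‖ ^ 2 ≤ ‖p‖ * re ⟪p x, x⟫_ℂ := by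
  set a := CFC.sqrt p
  have ha : IsSelfAdjoint a := .of_nonneg (CFC.sqrt_nonneg p)
  have hap : a * a = p := CFC.sqrt_mul_sqrt_self p hp
  have hnorm : ‖a‖ ^ 2 = ‖p‖ := by
    rw [sq, ← CStarRing.norm_star_mul_self, ha.star_eq, hap]
  have hinner : ‖a x‖ ^ 2 = re ⟪p x, x⟫_ℂ := by
    rw [← hap, ← inner_self_eq_norm_sq (𝕜 := ℂ)]
    exact congrArg re (ha.isSymmetric (a x) x).symm
  calc ‖p x‖ ^ 2 = ‖a (a x)‖ ^ 2 := by rw [← hap]; rfl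
    _ ≤ (‖a‖ * ‖a x‖) ^ 2 := by gcongr; exact a.le_opNorm _
    _ = ‖p‖ * re ⟪p x, x⟫_ℂ := by rw [mul_pow, hnorm, hinner]

lemma cauchySeq_apply_of_monotone_of_le {f : ℕ → E →L[ℂ] E} (hf : Monotone f)
    {b : E →L[ℂ] E} (hb : ∀ n, f n ≤ b) (x : E) : CauchySeq (fun n => f n x) := by
  set g : ℕ → ℝ := fun n => re ⟪f n x, x⟫_ℂ
  set L := ⨆ n, g n
  have hg : Monotone g := fun n m hnm => re_inner_le_re_inner_of_le (hf hnm) x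
  have hgL : Tendsto g atTop (𝓝 L) := tendsto_atTop_ciSup hg
    ⟨re ⟪b x, x⟫_ℂ, by rintro _ ⟨n, rfl⟩; exact re_inner_le_re_inner_of_le (hb n) x⟩
  set M := ‖b - f 0‖
  refine cauchySeq_of_le_tendsto_0' (fun n => √(M * (L - g n))) (fun n m hnm => ?_) ?_
  · have hfnm : 0 ≤ f m - f n := sub_nonneg.2 (hf hnm)
    have hfnm' := (nonneg_iff_isPositive _).1 hfnm
    rw [dist_comm, dist_eq_norm, ← sub_apply]
    refine Real.le_sqrt_of_sq_le ?_
    calc ‖(f m - f n) x‖ ^ 2 ≤ ‖f m - f n‖ * re ⟪(f m - f n) x, x⟫_ℂ :=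
          norm_apply_sq_le_norm_mul_re_inner hfnm x
      _ ≤ M * (L - g n) := by
          refine mul_le_mul ?_ ?_ (hfnm'.re_inner_nonneg_left x) (norm_nonneg _)
          · exact CStarAlgebra.norm_le_norm_of_nonneg_of_le hfnm
              (sub_le_sub (hb m) (hf (Nat.zero_le n)))
          · simp only [sub_apply, inner_sub_left, map_sub]
            exact sub_le_sub_right (hg.ge_of_tendsto hgL m) _
  · have : Tendsto (fun n => M * (L - g n)) atTop (𝓝 (M * (L - L))) :=
      (tendsto_const_nhds.sub hgL).const_mul M
    simpa using this.sqrt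

lemma isSelfAdjoint_of_tendsto_apply {f : ℕ → E →L[ℂ] E} (hf : ∀ n, IsSelfAdjoint (f n))
    {T : E →L[ℂ] E} (hT : ∀ x, Tendsto (fun n => f n x) atTop (𝓝 (T x))) :
    IsSelfAdjoint T := by
  rw [isSelfAdjoint_iff_isSymmetric]
  intro x y
  refine tendsto_nhds_unique ((hT x).inner tendsto_const_nhds) ?_
  exact (tendsto_const_nhds.inner (hT y)).congr fun n => ((hf n).isSymmetric x y).symm

theorem exists_isSelfAdjoint_tendsto_apply_of_monotone_of_le {f : ℕ → E →L[ℂ] E}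
    (hf : Monotone f) (hf₀ : IsSelfAdjoint (f 0)) {b : E →L[ℂ] E} (hb : ∀ n, f n ≤ b) :
    ∃ T : E →L[ℂ] E, IsSelfAdjoint T ∧ ∀ x, Tendsto (fun n => f n x) atTop (𝓝 (T x)) := by
  choose T hT using fun x =>
    cauchySeq_tendsto_of_complete (cauchySeq_apply_of_monotone_of_le hf hb x)
  refine ⟨continuousLinearMapOfTendsto f (tendsto_pi_nhds.2 hT), ?_, hT⟩
  refine isSelfAdjoint_of_tendsto_apply (fun n => ?_) hT
  simpa using hf₀.add (IsSelfAdjoint.of_nonneg (sub_nonneg.2 (hf (Nat.zero_le n))))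

end LoewnerOrder

section DiagOp

variable {H : Type*} [NormedAddCommGroup H] [InnerProductSpace ℂ H]

lemma diagOp_sub (q r : H →L[ℂ] H) : diagOp (q - r) = diagOp q - diagOp r := by
  ext ξ k
  simp

lemma diagOp_nonneg {q : H →L[ℂ] H} (hq : 0 ≤ q) : 0 ≤ diagOp q := by
  refine (nonneg_iff_isPositive _).2 (isPositive_of_inner_nonneg fun ξ => ?_)
  rw [lp.inner_eq_tsum]
  exact tsum_nonneg fun k => ((nonneg_iff_isPositive q).1 hq).inner_nonneg_left (ξ k)

variable [CompleteSpace H]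

lemma diagOp_mono : Monotone (diagOp : (H →L[ℂ] H) → l2 H →L[ℂ] l2 H) := fun q r hqr => by
  rw [← sub_nonneg, ← diagOp_sub]
  exact diagOp_nonneg (sub_nonneg.2 hqr)

end DiagOp

section Riccati

variable {H : Type*} [NormedAddCommGroup H] [InnerProductSpace ℂ H] [CompleteSpace H]
  {A11 : H →L[ℂ] H} (A12 : l2 H →L[ℂ] H) {A22 : l2 H →L[ℂ] l2 H}

lemma isStrictlyPositive_diagOp_sub (hgap : StronglyPositive (diagOp A11 - A22))
    {s : H →L[ℂ] H} (hs : A11 ≤ s) : IsStrictlyPositive (diagOp s - A22) :=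
  (hgap.mono (sub_le_sub_right (diagOp_mono hs) A22)).isStrictlyPositive

lemma le_riccatiMap (hgap : StronglyPositive (diagOp A11 - A22)) {s : H →L[ℂ] H}
    (hs : A11 ≤ s) : A11 ≤ riccatiMap A11 A12 A22 s :=
  le_add_of_nonneg_right <|
    comp_ringInverse_comp_adjoint_nonneg A12 (isStrictlyPositive_diagOp_sub hgap hs)

lemma riccatiMap_antitoneOn (hgap : StronglyPositive (diagOp A11 - A22)) :
    AntitoneOn (riccatiMap A11 A12 A22) (Set.Ici A11) := fun _ hs _ _ hst =>
  add_le_add_right (comp_ringInverse_comp_adjoint_antitone A12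
    (isStrictlyPositive_diagOp_sub hgap hs) (sub_le_sub_right (diagOp_mono hst) A22)) A11

lemma le_riccatiSeq (hgap : StronglyPositive (diagOp A11 - A22)) (n : ℕ) :
    A11 ≤ riccatiSeq A11 A12 A22 n := by
  induction n with
  | zero => exact le_rfl
  | succ n ih => exact le_riccatiMap A12 hgap ih

lemma riccatiSeq_le_riccatiSeq_one (hgap : StronglyPositive (diagOp A11 - A22)) (n : ℕ) :
    riccatiSeq A11 A12 A22 n ≤ riccatiSeq A11 A12 A22 1 := by
  cases n with
  | zero => exact le_riccatiSeq A12 hgap 1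
  | succ n =>
    have hn := le_riccatiSeq A12 hgap n
    exact riccatiMap_antitoneOn A12 hgap Set.self_mem_Ici hn hn

lemma monotone_riccatiSeq_two_mul (hgap : StronglyPositive (diagOp A11 - A22)) :
    Monotone fun n => riccatiSeq A11 A12 A22 (2 * n) := by
  have hF := riccatiMap_antitoneOn A12 hgap
  have hS := le_riccatiSeq A12 hgap
  refine monotone_nat_of_le_succ fun n => ?_
  induction n with
  | zero => exact hS 2
  | succ n ih =>
    have hodd : riccatiSeq A11 A12 A22 (2 * n + 3) ≤ riccatiSeq A11 A12 A22 (2 * n + 1) :=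
      hF (hS _) (hS _) ih
    exact hF (hS _) (hS _) hodd

end Riccati

theorem riccati_even_iterates_monotone_and_strongly_convergent_general
    {H : Type*} [NormedAddCommGroup H] [InnerProductSpace ℂ H] [CompleteSpace H]
    (A11 : H →L[ℂ] H) (A12 : l2 H →L[ℂ] H) (A22 : l2 H →L[ℂ] l2 H)
    (hA11sa : IsSelfAdjoint A11)
    (hgap : StronglyPositive (diagOp A11 - A22)) :
    Monotone (fun n => riccatiSeq A11 A12 A22 (2 * n)) ∧
      ∃ slim : H →L[ℂ] H, IsSelfAdjoint slim ∧
        ∀ x : H, Filter.Tendsto (fun n => riccatiSeq A11 A12 A22 (2 * n) x)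
          Filter.atTop (𝓝 (slim x)) := by
  have hmono := monotone_riccatiSeq_two_mul A12 hgap
  exact ⟨hmono, exists_isSelfAdjoint_tendsto_apply_of_monotone_of_le hmono hA11sa
    fun n => riccatiSeq_le_riccatiSeq_one A12 hgap (2 * n)⟩

/-- **Lemma 2.2 (part 1).**  The even successive approximations `s₀, s₂, s₄, …` increase
monotonically in the Loewner order and converge strongly to a selfadjoint operator. -/
theorem riccati_even_iterates_monotone_and_strongly_convergent
    {H : Type*} [NormedAddCommGroup H] [InnerProductSpace ℂ H] [CompleteSpace H]
    [TopologicalSpace.SeparableSpace H]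
    (A11 : H →L[ℂ] H) (A12 : l2 H →L[ℂ] H) (A22 : l2 H →L[ℂ] l2 H)
    (hA11sa : IsSelfAdjoint A11) (hA22sa : IsSelfAdjoint A22)
    (hgap : StronglyPositive (diagOp A11 - A22)) :
    Monotone (fun n => riccatiSeq A11 A12 A22 (2 * n)) ∧
      ∃ slim : H →L[ℂ] H, IsSelfAdjoint slim ∧
        ∀ x : H, Filter.Tendsto (fun n => riccatiSeq A11 A12 A22 (2 * n) x)
          Filter.atTop (𝓝 (slim x)) :=
  riccati_even_iterates_monotone_and_strongly_convergent_general A11 A12 A22 hA11sa hgap
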